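/- (Corollary 1) Consider a finite MDP with finite nonempty state set S, finite nonempty action set A, transition probabilities p : S × A × S → ℝ with p(s'|s,a) ≥ 0 and Σ_{s'} p(s'|s,a) = 1, reward r : S × A → ℝ, discount γ ∈ [0,1), and behavior policy μ : S × A → ℝ with μ(a|s) ≥ 0 and Σ_a μ(a|s) = 1. Let Q* : S × A → ℝ satisfy the support-constrained Bellman optimality equation Q*(s,a) = r(s,a) + γ·Σ_{s'} p(s'|s,a)·max{Q*(s',a') : μ(a'|s') > 0}. Then for any τ ∈ (0,1), any τ-expectile value function V_τ satisfies V_τ(s) ≤ max{Q*(s,a) : μ(a|s) > 0} for every state s. -/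
import Mathlib


open Finset

/-- `m` is the `τ`-expectile of the values `f` under the weights `w`. -/
def IsExpectile {A : Type*} [Fintype A] (τ : ℝ) (w f : A → ℝ) (m : ℝ) : Prop :=
  τ * ∑ a, w a * max (f a - m) 0 = (1 - τ) * ∑ a, w a * max (m - f a) 0

/-- `V` is a `τ`-expectile value function for the finite MDP `(p, r, γ)` and behavior
policy `μ`. -/
def IsExpectileValueFn {S A : Type*} [Fintype S] [Fintype A]
    (p : S → A → S → ℝ) (r : S → A → ℝ) (γ : ℝ) (μ : S → A → ℝ)
    (τ : ℝ) (V : S → ℝ) : Prop :=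
  ∀ s, IsExpectile τ (μ s) (fun a => r s a + γ * ∑ s', p s a s' * V s') (V s)

lemma expectile_le_max {A : Type*} [Fintype A] {τ : ℝ} (hτ : τ ∈ Set.Ioo (0:ℝ) 1)
    {w f : A → ℝ} (hw : ∀ a, 0 ≤ w a) (hws : ∑ a, w a = 1) {m : ℝ}
    (h : IsExpectile τ w f m) : ∃ a, 0 < w a ∧ m ≤ f a := by
  by_contra hc
  push_neg at hc
  have hL : ∑ a, w a * max (f a - m) 0 = 0 := by
    apply Finset.sum_eq_zero
    intro a _
    rcases eq_or_lt_of_le (hw a) with h0 | h0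
    · simp [← h0]
    · have := hc a h0
      rw [max_eq_right (by linarith)]; ring
  have ha : ∃ a, 0 < w a := by
    by_contra h'
    push_neg at h'
    have : ∑ a, w a = 0 :=
      Finset.sum_eq_zero (fun a _ => le_antisymm (h' a) (hw a))
    rw [this] at hws; norm_num at hws
  obtain ⟨a, hwa⟩ := ha
  have hfa := hc a hwa
  have hR : 0 < ∑ a, w a * max (m - f a) 0 := by
    apply Finset.sum_pos'
    · intro i _; exact mul_nonneg (hw i) (le_max_right _ _)
    · exact ⟨a, Finset.mem_univ a,
        mul_pos hwa (by rw [max_eq_left (by linarith)]; linarith)⟩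
  unfold IsExpectile at h
  rw [hL, mul_zero] at h
  nlinarith [hτ.2]

/-- Corollary 1: If `Q*` satisfies the support-constrained Bellman
optimality equation
`Q*(s,a) = r(s,a) + γ·Σ_{s'} p(s'|s,a)·max{Q*(s',a') : μ(a'|s') > 0}`,
then any `τ`-expectile value function `V_τ` satisfies
`V_τ(s) ≤ max{Q*(s,a) : μ(a|s) > 0}` for every state `s`. -/
theorem expectile_value_function_le_constrained_optimal
    {S A : Type*} [Fintype S] [Nonempty S] [Fintype A] [Nonempty A]
    (p : S → A → S → ℝ) (hp : ∀ s a s', 0 ≤ p s a s')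
    (hps : ∀ s a, ∑ s', p s a s' = 1)
    (r : S → A → ℝ) (γ : ℝ) (hγ : γ ∈ Set.Ico (0 : ℝ) 1)
    (μ : S → A → ℝ) (hμ : ∀ s a, 0 ≤ μ s a) (hμs : ∀ s, ∑ a, μ s a = 1)
    (Q : S → A → ℝ)
    (hQ : ∀ s a, Q s a
      = r s a + γ * ∑ s', p s a s' * sSup (Q s' '' {a' | 0 < μ s' a'}))
    (τ : ℝ) (hτ : τ ∈ Set.Ioo (0 : ℝ) 1)
    (V : S → ℝ) (hV : IsExpectileValueFn p r γ μ τ V) :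
    ∀ s, V s ≤ sSup (Q s '' {a | 0 < μ s a}) := by
  set M : S → ℝ := fun s => sSup (Q s '' {a | 0 < μ s a}) with hM
  have hub : ∀ s a, 0 < μ s a → Q s a ≤ M s := by
    intro s a hμa
    exact le_csSup ((Set.toFinite _).image _).bddAbove ⟨a, hμa, rfl⟩
  obtain ⟨s₀, -, hs₀⟩ := Finset.exists_max_image Finset.univ (fun s => V s - M s)
    ⟨Classical.arbitrary S, Finset.mem_univ _⟩
  have hδ : ∀ s, V s - M s ≤ V s₀ - M s₀ := fun s => hs₀ s (Finset.mem_univ s)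
  have hδ0 : V s₀ - M s₀ ≤ 0 := by
    by_contra hpos
    push_neg at hpos
    obtain ⟨a, hμa, hVle⟩ := expectile_le_max hτ (hμ s₀) (hμs s₀) (hV s₀)
    have hsum : ∑ s', p s₀ a s' * V s' ≤ (∑ s', p s₀ a s' * M s') + (V s₀ - M s₀) := by
      calc ∑ s', p s₀ a s' * V s' ≤ ∑ s', p s₀ a s' * (M s' + (V s₀ - M s₀)) := by
            apply Finset.sum_le_sum
            intro s' _
            exact mul_le_mul_of_nonneg_left (by linarith [hδ s']) (hp s₀ a s')
        _ = (∑ s', p s₀ a s' * M s') + (∑ s', p s₀ a s') * (V s₀ - M s₀) := by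
            rw [Finset.sum_mul, ← Finset.sum_add_distrib]
            exact Finset.sum_congr rfl (fun x _ => by ring)
        _ = (∑ s', p s₀ a s' * M s') + (V s₀ - M s₀) := by rw [hps]; ring
    have hQa : Q s₀ a = r s₀ a + γ * ∑ s', p s₀ a s' * M s' := hQ s₀ a
    have h1 : V s₀ ≤ Q s₀ a + γ * (V s₀ - M s₀) := by
      nlinarith [hγ.1]
    have h2 : Q s₀ a ≤ M s₀ := hub s₀ a hμa
    nlinarith [hγ.2]
  intro s
  have := hδ s
  simp only [hM] at *
  linarith
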